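/- Fix an arbitrary time T ≥ 1 and an arbitrary feasible node-selection sequence χ = (χ(1),…,χ(T)), where each χ(t) = (S(t), u(t)) consists of a node u(t) and a size-k sample S(t) of its neighbours. If the Node Model is run for T steps using sequence χ and the Diffusion Process (with cost vector ξ(0)^⊤ and initial loads e^(u), u∈V) is run for T steps using the reversed sequence χ^R, then W(T) = ξ(T)^⊤. -/

import Mathlib

/-!
Multiplying a row vector by `B(u, S)` performs exactly one Node Model update at `u`: the
column of `u` carries the weights `α` and `(1-α)/k`, every other column is a unit vector
(this needs `u ∉ S`, true because `S` consists of neighbours of `u`). Hence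
`ξ(0)ᵀ B(χ(T)) ⋯ B(χ(1))` applies the updates `χ(1), …, χ(T)` in this order, and the
product `R(T)` of the diffusion run with `χ^R` is exactly this product.
-/

open MeasureTheory ProbabilityTheory Finset

instance finsetFinMeasurableSpace (n : ℕ) : MeasurableSpace (Finset (Fin n)) := ⊤

/-- A step of the Node Model: selected node together with the selected set of neighbours. -/
abbrev NodeStep (n : ℕ) := Fin n × Finset (Fin n)

/-- Distribution of a single step of the Node Model: a uniformly random node `u`,
together with a uniformly random set of `k` of its neighbours. -/
noncomputable def nodeStepPMF {n : ℕ} (G : SimpleGraph (Fin n)) [DecidableRel G.Adj]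
    (hn : Nonempty (Fin n)) (k : ℕ) (hk : ∀ u, k ≤ G.degree u) : PMF (NodeStep n) :=
  letI := hn
  (PMF.uniformOfFintype (Fin n)).bind fun u =>
    (PMF.uniformOfFinset ((G.neighborFinset u).powersetCard k)
      (Finset.powersetCard_nonempty.2 (hk u))).map fun S => (u, S)

/-- One update of the Node Model: the selected node `s.1` replaces its value by an
`α`-fraction of its own value plus a `(1-α)/k`-fraction of the values of the selected
neighbours `s.2`. -/
noncomputable def nodeUpdate {n : ℕ} (α : ℝ) (k : ℕ) (s : NodeStep n) (ξ : Fin n → ℝ) :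
    Fin n → ℝ :=
  fun w => if w = s.1 then α * ξ w + ((1 - α) / k) * ∑ v ∈ s.2, ξ v else ξ w

/-- The trajectory of node values of the Node Model, given the sequence of step choices. -/
noncomputable def nodeTraj {n : ℕ} (α : ℝ) (k : ℕ) (ξ0 : Fin n → ℝ)
    (ω : ℕ → NodeStep n) : ℕ → Fin n → ℝ
  | 0 => ξ0
  | t + 1 => nodeUpdate α k (ω t) (nodeTraj α k ξ0 ω t)

/-- Stationary distribution of the lazy random walk: `π u = d_u / (2m)`. -/
noncomputable def piRW {n : ℕ} (G : SimpleGraph (Fin n)) [DecidableRel G.Adj] (u : Fin n) : ℝ :=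
  (G.degree u : ℝ) / (2 * (G.edgeFinset.card : ℝ))

/-- The potential `φ(ξ) = (1/2) Σ_{u,v} π_u π_v (ξ_u - ξ_v)²`. -/
noncomputable def phi {n : ℕ} (G : SimpleGraph (Fin n)) [DecidableRel G.Adj]
    (ξ : Fin n → ℝ) : ℝ :=
  (1 / 2) * ∑ u, ∑ v, piRW G u * piRW G v * (ξ u - ξ v) ^ 2

/-- Transition matrix of the lazy random walk on `G`. -/
noncomputable def lazyP {n : ℕ} (G : SimpleGraph (Fin n)) [DecidableRel G.Adj] :
    Matrix (Fin n) (Fin n) ℝ :=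
  Matrix.of fun i j =>
    if i = j then 1 / 2 else if G.Adj i j then 1 / (2 * (G.degree i : ℝ)) else 0

/-- `lam` is the second-largest eigenvalue of the (reversible) lazy random-walk matrix `P`:
it is the largest eigenvalue attained on the space of vectors `π`-orthogonal to `1`. -/
def IsSecondEigenvalueP {n : ℕ} (G : SimpleGraph (Fin n)) [DecidableRel G.Adj]
    (lam : ℝ) : Prop :=
  (∃ f : Fin n → ℝ, f ≠ 0 ∧ (lazyP G).mulVec f = lam • f ∧ ∑ x, piRW G x * f x = 0) ∧
  ∀ lam' : ℝ,
    (∃ f : Fin n → ℝ, f ≠ 0 ∧ (lazyP G).mulVec f = lam' • f ∧ ∑ x, piRW G x * f x = 0) →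
      lam' ≤ lam

/-- The matrix `B(s)` of one diffusion step with step choice `s = (u, S)`:
`B_{ii} = 1` for `i ≠ u`, `B_{uu} = α`, `B_{i,u} = (1-α)/k` for `i ∈ S`, and `0` otherwise. -/
noncomputable def Bmat {n : ℕ} (α : ℝ) (k : ℕ) (s : NodeStep n) :
    Matrix (Fin n) (Fin n) ℝ :=
  Matrix.of fun i j =>
    if j = s.1 then (if i = s.1 then α else if i ∈ s.2 then (1 - α) / k else 0)
    else if i = j then 1 else 0

/-- The product `R(t) = B(t) B(t-1) ⋯ B(1)` of the diffusion-step matrices, where the step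
at time `t` uses the choice `ω (t-1)`. -/
noncomputable def Rmat {n : ℕ} (α : ℝ) (k : ℕ) (ω : ℕ → NodeStep n) :
    ℕ → Matrix (Fin n) (Fin n) ℝ
  | 0 => 1
  | t + 1 => Bmat α k (ω t) * Rmat α k ω t

/-- The cost vector `W(t) = ξ(0)ᵀ R(t)` of the Diffusion Process applied to the cost vector
`ξ(0)ᵀ` and the initial load vectors `e^(u)`, `u ∈ V`. -/
noncomputable def Wcost {n : ℕ} (α : ℝ) (k : ℕ) (ξ0 : Fin n → ℝ) (ω : ℕ → NodeStep n)
    (t : ℕ) : Fin n → ℝ :=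
  Matrix.vecMul ξ0 (Rmat α k ω t)
lemma vecMul_Bmat {n : ℕ} (α : ℝ) (k : ℕ) {s : NodeStep n} (hs : s.1 ∉ s.2) (ξ : Fin n → ℝ) :
    Matrix.vecMul ξ (Bmat α k s) = nodeUpdate α k s ξ := by
  ext j
  simp only [Matrix.vecMul, dotProduct, Bmat, nodeUpdate, Matrix.of_apply]
  split_ifs with hj
  · rw [← add_sum_erase _ _ (mem_univ s.1), if_pos rfl,
      sum_congr rfl fun i hi => by rw [if_neg (ne_of_mem_erase hi), mul_ite, mul_zero],
      sum_ite_mem, mul_sum, hj]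
    have hS : univ.erase s.1 ∩ s.2 = s.2 :=
      inter_eq_right.2 fun i hi => mem_erase.2 ⟨fun h => hs (h ▸ hi), mem_univ i⟩
    simp only [hS, mul_comm]
  · simp

lemma Rmat_succ' {n : ℕ} (α : ℝ) (k : ℕ) (ω : ℕ → NodeStep n) (t : ℕ) :
    Rmat α k ω (t + 1) = Rmat α k (fun s => ω (s + 1)) t * Bmat α k (ω 0) := by
  induction t with
  | zero => simp [Rmat]
  | succ t ih => rw [Rmat, ih, ← mul_assoc]; rfl

theorem Wcost_reverse_eq_nodeTraj {n : ℕ} (α : ℝ) (k : ℕ) (ξ0 : Fin n → ℝ)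
    (χ : ℕ → NodeStep n) (T : ℕ) (hχ : ∀ t < T, (χ t).1 ∉ (χ t).2) :
    Wcost α k ξ0 (fun s => χ (T - 1 - s)) T = nodeTraj α k ξ0 χ T := by
  induction T with
  | zero => simp [Wcost, Rmat, nodeTraj]
  | succ T ih =>
    have hrev : (fun s => χ (T + 1 - 1 - (s + 1))) = fun s => χ (T - 1 - s) := by
      funext s; congr 1; omega
    rw [Wcost, Rmat_succ', hrev, ← Matrix.vecMul_vecMul, ← Wcost,
      ih fun t ht => hχ t (by omega), Nat.sub_zero, Nat.add_sub_cancel,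
      vecMul_Bmat α k (hχ T T.lt_succ_self)]
    rfl

theorem node_model_diffusion_duality_reversed_general {n : ℕ} (G : SimpleGraph (Fin n))
    [DecidableRel G.Adj] (α : ℝ)
    (k : ℕ) (ξ0 : Fin n → ℝ)
    (T : ℕ) (χ : ℕ → NodeStep n)
    (hfeas : ∀ t < T, (χ t).2 ⊆ G.neighborFinset (χ t).1 ∧ (χ t).2.card = k) :
    Wcost α k ξ0 (fun s => χ (T - 1 - s)) T = nodeTraj α k ξ0 χ T :=
  Wcost_reverse_eq_nodeTraj α k ξ0 χ T fun t ht hmem =>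
    G.notMem_neighborFinset_self _ ((hfeas t ht).1 hmem)

/-- **Lemma 2 (deterministic duality under time reversal).**
Fix `T ≥ 1` and a feasible node-selection sequence `χ = (χ(1), …, χ(T))`, where each
`χ(t) = (u(t), S(t))` consists of a node `u(t)` together with a size-`k` subset `S(t)` of its
neighbours. If the Node Model is run for `T` steps using `χ` and the Diffusion Process (with
cost vector `ξ(0)ᵀ` and initial loads `e^(u)`) is run for `T` steps using the reversed
sequence `χ^R`, then `W(T) = ξ(T)ᵀ`. -/
theorem node_model_diffusion_duality_reversed {n : ℕ} (G : SimpleGraph (Fin n))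
    [DecidableRel G.Adj] (α : ℝ) (hα : α ∈ Set.Ioo (0 : ℝ) 1)
    (k : ℕ) (hk1 : 1 ≤ k) (ξ0 : Fin n → ℝ)
    (T : ℕ) (hT : 1 ≤ T) (χ : ℕ → NodeStep n)
    (hfeas : ∀ t < T, (χ t).2 ⊆ G.neighborFinset (χ t).1 ∧ (χ t).2.card = k) :
    Wcost α k ξ0 (fun s => χ (T - 1 - s)) T = nodeTraj α k ξ0 χ T :=
  node_model_diffusion_duality_reversed_general G α k ξ0 T χ hfeas
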